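/- Let C = A × B be a product of two directed skeletal small categories and V a C-module. The assignment sending (X,Y) to the k-submodule V^hor_{(X,Y)} = Σ_{W ≺ X} Σ_{f ∈ A(W,X)} (f, id_Y)_*(V_{(W,Y)}) defines a C-submodule of V. -/

import Mathlib

open CategoryTheory Limits

noncomputable section

variable (k : Type) [CommRing k]

/-- `X ≺ Y` : `X ⪯ Y` (some morphism `X ⟶ Y` exists) but not `Y ⪯ X`. -/
def Prec {D : Type} [Category D] (X Y : D) : Prop :=
  Nonempty (X ⟶ Y) ∧ ¬ Nonempty (Y ⟶ X)

/-- A skeletal small category is *directed* if `⪯` is a partial order. -/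
def Directed' (D : Type) [Category D] : Prop :=
  IsPartialOrder D (fun X Y => Nonempty (X ⟶ Y))

variable (A B : Type) [SmallCategory A] [SmallCategory B]

/-- The horizontal submodule: `V^hor_{(X,Y)} = Σ_{W ≺ X} Σ_{f ∈ A(W,X)}
(f, id_Y)_*(V_{(W,Y)})`. -/
def VhorSub (V : A × B ⥤ ModuleCat k) (P : A × B) : Submodule k (V.obj P) :=
  ⨆ (W : A) (_ : Prec W P.1) (f : W ⟶ P.1),
    LinearMap.range (V.map ((f, 𝟙 P.2) : (W, P.2) ⟶ P)).hom

/-- The vertical submodule: `V^ver_{(X,Y)} = Σ_{Z ≺ Y} Σ_{g ∈ B(Z,Y)}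
(id_X, g)_*(V_{(X,Z)})`. -/
def VverSub (V : A × B ⥤ ModuleCat k) (P : A × B) : Submodule k (V.obj P) :=
  ⨆ (Z : B) (_ : Prec Z P.2) (g : Z ⟶ P.2),
    LinearMap.range (V.map ((𝟙 P.1, g) : (P.1, Z) ⟶ P)).hom

/-- The submodule `Ṽ_Q ⊆ V_Q` spanned by the images of `V_P` for `P ≺ Q`. -/
def tildeSub {D : Type} [Category D] (V : D ⥤ ModuleCat k) (X : D) :
    Submodule k (V.obj X) :=
  ⨆ (W : D) (_ : Prec W X) (f : W ⟶ X), LinearMap.range (V.map f).hom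

/-- for `C = A × B` a product of directed skeletal small
categories and `V` a `C`-module, the assignment `(X,Y) ↦ V^hor_{(X,Y)}`
defines a `C`-submodule of `V`: it is stable under all morphisms of `C`. -/
theorem stmt3 (k : Type) [CommRing k] (A B : Type) [SmallCategory A]
    [SmallCategory B] (hA : Skeletal A) (hB : Skeletal B)
    (hdA : Directed' A) (hdB : Directed' B)
    (V : A × B ⥤ ModuleCat k) :
    ∀ (P Q : A × B) (φ : P ⟶ Q),
      Submodule.map (V.map φ).hom (VhorSub k A B V P) ≤ VhorSub k A B V Q := by
  intro P Q φ
  rw [VhorSub, Submodule.map_iSup]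
  refine iSup_le fun W => ?_
  rw [Submodule.map_iSup]
  refine iSup_le fun hW => ?_
  rw [Submodule.map_iSup]
  refine iSup_le fun f => ?_
  have hWQ : Prec W Q.1 := by
    refine ⟨hdA.trans _ _ _ hW.1 ⟨φ.1⟩, fun hQW => ?_⟩
    exact hW.2 (hdA.trans _ _ _ ⟨φ.1⟩ (hdA.antisymm _ _ (hdA.trans _ _ _ hQW hW.1) ⟨φ.1⟩ ▸ hQW))
  have hcomp : ((f, 𝟙 P.2) : (W, P.2) ⟶ P) ≫ φ =
      ((𝟙 W, φ.2) : (W, P.2) ⟶ (W, Q.2)) ≫ ((f ≫ φ.1, 𝟙 Q.2) : (W, Q.2) ⟶ Q) := by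
    apply Prod.ext <;> simp [CategoryTheory.prod_comp]
  rw [← LinearMap.range_comp]
  have : (V.map φ).hom.comp (V.map ((f, 𝟙 P.2) : (W, P.2) ⟶ P)).hom =
      (V.map ((f ≫ φ.1, 𝟙 Q.2) : (W, Q.2) ⟶ Q)).hom.comp
        (V.map ((𝟙 W, φ.2) : (W, P.2) ⟶ (W, Q.2))).hom := by
    rw [show ((V.map φ).hom.comp (V.map ((f, 𝟙 P.2) : (W, P.2) ⟶ P)).hom : _ →ₗ[k] _) =
        (V.map (((f, 𝟙 P.2) : (W, P.2) ⟶ P) ≫ φ)).hom by rw [V.map_comp]; rfl,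
      hcomp, V.map_comp]
    rfl
  rw [this]
  refine le_trans (LinearMap.range_comp_le_range _ _) ?_
  rw [VhorSub]
  exact le_iSup_of_le W (le_iSup_of_le hWQ (le_iSup_of_le (f ≫ φ.1) le_rfl))
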